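/- In the Black-Scholes setting, for fixed S, T, σ > 0 and r, q ∈ ℝ, and for any strikes 0 < K2 < K3, the vertical-spread no-arbitrage condition holds: C(S,K2,T,r,q,σ) > C(S,K3,T,r,q,σ); i.e. the call price is strictly decreasing in the strike. -/

import Mathlib

/-!
Differentiating in the strike, the two terms carrying the normal density cancel: with
`a = σ√T` one has `φ(d₁ - a) = φ(d₁) e^{a d₁ - a²/2}` and
`a d₁ - a²/2 = log (S/K) + (r - q) T`,
so `S e^{-qT} φ(d₁) = K e^{-rT} φ(d₂)`. What remains is `∂C/∂K = -e^{-rT} N(d₂) < 0`.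
-/

open Real MeasureTheory Set

/-- Standard normal density. -/
noncomputable def stdNormalPdf (x : ℝ) : ℝ := Real.exp (-x ^ 2 / 2) / Real.sqrt (2 * Real.pi)

/-- Standard normal cumulative distribution function. -/
noncomputable def stdNormalCdf (x : ℝ) : ℝ := ∫ t in Set.Iic x, stdNormalPdf t

/-- Black-Scholes `d₁`. -/
noncomputable def bsD1 (S K T r q σ : ℝ) : ℝ :=
  (Real.log (S / K) + (r - q + σ ^ 2 / 2) * T) / (σ * Real.sqrt T)

/-- Black-Scholes `d₂`. -/
noncomputable def bsD2 (S K T r q σ : ℝ) : ℝ := bsD1 S K T r q σ - σ * Real.sqrt T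

/-- Black-Scholes call option price. -/
noncomputable def bsCall (S K T r q σ : ℝ) : ℝ :=
  S * Real.exp (-q * T) * stdNormalCdf (bsD1 S K T r q σ) -
    K * Real.exp (-r * T) * stdNormalCdf (bsD2 S K T r q σ)

lemma continuous_stdNormalPdf : Continuous stdNormalPdf := by
  unfold stdNormalPdf; fun_prop

lemma integrable_stdNormalPdf : Integrable stdNormalPdf := by
  convert (integrable_exp_neg_mul_sq (by norm_num : (0 : ℝ) < 1 / 2)).div_const √(2 * π)
    using 2 with x
  unfold stdNormalPdf
  ring_nf

lemma stdNormalPdf_pos (x : ℝ) : 0 < stdNormalPdf x := by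
  unfold stdNormalPdf; positivity

lemma stdNormalCdf_pos (x : ℝ) : 0 < stdNormalCdf x := by
  rw [stdNormalCdf, setIntegral_pos_iff_support_of_nonneg_ae
    (.of_forall fun t ↦ (stdNormalPdf_pos t).le) integrable_stdNormalPdf.integrableOn,
    Function.support_eq_univ fun t ↦ (stdNormalPdf_pos t).ne']
  simp

lemma hasDerivAt_integral_Iic {f : ℝ → ℝ} (hf : Integrable f) (hf_cont : Continuous f)
    (x : ℝ) : HasDerivAt (fun y ↦ ∫ t in Iic y, f t) (f x) x := by
  have h := (intervalIntegral.integral_hasDerivAt_right (hf.intervalIntegrable (a := 0) (b := x))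
    (hf_cont.stronglyMeasurableAtFilter _ _) hf_cont.continuousAt).const_add (∫ t in Iic 0, f t)
  refine h.congr_of_eventuallyEq (.of_forall fun y ↦ ?_)
  dsimp only
  rw [← intervalIntegral.integral_Iic_sub_Iic hf.integrableOn hf.integrableOn]
  ring

lemma hasDerivAt_stdNormalCdf (x : ℝ) : HasDerivAt stdNormalCdf (stdNormalPdf x) x :=
  hasDerivAt_integral_Iic integrable_stdNormalPdf continuous_stdNormalPdf x

lemma stdNormalPdf_sub (x a : ℝ) :
    stdNormalPdf (x - a) = stdNormalPdf x * exp (a * x - a ^ 2 / 2) := by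
  rw [stdNormalPdf, stdNormalPdf, div_mul_eq_mul_div, ← exp_add]
  ring_nf

section Strike

variable {S K T r q σ : ℝ}

lemma mul_sqrt_mul_bsD1 (hT : 0 < T) (hσ : σ ≠ 0) :
    σ * √T * bsD1 S K T r q σ = log (S / K) + (r - q + σ ^ 2 / 2) * T := by
  have : σ * √T ≠ 0 := mul_ne_zero hσ (sqrt_pos.2 hT).ne'
  rw [bsD1]
  field_simp

lemma mul_exp_mul_stdNormalPdf_bsD1 (hS : 0 < S) (hK : 0 < K) (hT : 0 < T) (hσ : σ ≠ 0) :
    S * exp (-q * T) * stdNormalPdf (bsD1 S K T r q σ) =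
      K * exp (-r * T) * stdNormalPdf (bsD2 S K T r q σ) := by
  have hexp : σ * √T * bsD1 S K T r q σ - (σ * √T) ^ 2 / 2 = log (S / K) + (r - q) * T := by
    rw [mul_sqrt_mul_bsD1 hT hσ, mul_pow, sq_sqrt hT.le]
    ring
  rw [bsD2, stdNormalPdf_sub, hexp, exp_add, exp_log (div_pos hS hK), sub_mul,
    exp_sub, neg_mul, neg_mul, exp_neg, exp_neg]
  field_simp

lemma hasDerivAt_bsD1_strike (hS : S ≠ 0) (hK : K ≠ 0) :
    HasDerivAt (fun k ↦ bsD1 S k T r q σ) (-K⁻¹ / (σ * √T)) K := by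
  have hlog : HasDerivAt (fun k ↦ log (S / k)) (-K⁻¹) K := by
    convert ((hasDerivAt_inv hK).const_mul S).log (mul_ne_zero hS (inv_ne_zero hK)) using 1
    · simp only [div_eq_mul_inv]
    · field_simp
  exact (hlog.add_const _).div_const _

lemma hasDerivAt_bsD2_strike (hS : S ≠ 0) (hK : K ≠ 0) :
    HasDerivAt (fun k ↦ bsD2 S k T r q σ) (-K⁻¹ / (σ * √T)) K :=
  (hasDerivAt_bsD1_strike hS hK).sub_const _

lemma hasDerivAt_bsCall_strike (hS : 0 < S) (hK : 0 < K) (hT : 0 < T) (hσ : σ ≠ 0) :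
    HasDerivAt (fun k ↦ bsCall S k T r q σ)
      (-(exp (-r * T) * stdNormalCdf (bsD2 S K T r q σ))) K := by
  have hN₁ := ((hasDerivAt_stdNormalCdf _).comp K
    (hasDerivAt_bsD1_strike hS.ne' hK.ne' (T := T) (r := r) (q := q) (σ := σ))).const_mul
    (S * exp (-q * T))
  have hN₂ := ((hasDerivAt_mul_const (exp (-r * T))).mul ((hasDerivAt_stdNormalCdf _).comp K
    (hasDerivAt_bsD2_strike hS.ne' hK.ne' (T := T) (r := r) (q := q) (σ := σ))))
  refine (hN₁.sub hN₂).congr_deriv ?_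
  simp only [Function.comp_apply]
  linear_combination
    (-K⁻¹ / (σ * √T)) * mul_exp_mul_stdNormalPdf_bsD1 hS hK hT hσ (r := r) (q := q)

lemma bsCall_strictAntiOn_strike (hS : 0 < S) (hT : 0 < T) (hσ : σ ≠ 0) :
    StrictAntiOn (fun k ↦ bsCall S k T r q σ) (Ioi 0) := by
  refine strictAntiOn_of_hasDerivWithinAt_neg (convex_Ioi 0)
    (f' := fun k ↦ -(exp (-r * T) * stdNormalCdf (bsD2 S k T r q σ)))
    (fun k hk ↦ (hasDerivAt_bsCall_strike hS hk hT hσ).continuousAt.continuousWithinAt)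
    (fun k hk ↦ ?_) (fun k _ ↦ ?_)
  · rw [interior_Ioi] at hk
    exact (hasDerivAt_bsCall_strike hS hk hT hσ).hasDerivWithinAt
  · have := stdNormalCdf_pos (bsD2 S k T r q σ)
    exact neg_neg_of_pos (by positivity)

end Strike

/-- Vertical-spread no-arbitrage condition: the Black-Scholes call price is
strictly decreasing in the strike. -/
theorem bsCall_vertical_spread (S T σ r q : ℝ) (hS : 0 < S) (hT : 0 < T) (hσ : 0 < σ)
    (K2 K3 : ℝ) (hK2 : 0 < K2) (h23 : K2 < K3) :
    bsCall S K3 T r q σ < bsCall S K2 T r q σ :=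
  bsCall_strictAntiOn_strike hS hT hσ.ne' hK2 (hK2.trans h23) h23
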